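/- arXiv:2302.08357 — 2 statements merged into one kernel-verified Lean document; each statement's English description precedes it below -/
import Mathlib

section
/- Let d ≥ 3 be an integer and let c ≥ 1 be a real number. In the unit-radius ball of ℝ^d, the Lebesgue volume of the region {x : ‖x‖ ≤ 1 and x₁ ≥ c/√(d−1)} is at most (2/c) · e^{−c²/2} times the Lebesgue volume of the upper hemisphere {x : ‖x‖ ≤ 1 and x₁ ≥ 0}. -/
/-!
Splitting off the first coordinate, Cavalieri's principle writes the volume of
`{x ∈ B^d | x₁ ∈ S}` as `vol(B^{d-1}) · ∫_S (1 - s²)^{(d-1)/2} ds`, so it suffices to compare the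
two one-dimensional integrals, with `n = d - 1`. Since `1 - s² ≤ e^{-s²}` and `s/b ≥ 1` on
`[b, ∞)`, the cap integral is at most `(1/b) ∫_b^∞ s e^{-n s²/2} ds = e^{-n b²/2}/(n b)`, which is
`e^{-c²/2}/(c √n)` for `b = c/√n`. By Bernoulli's inequality the integrand is at least `1/2` on
`[0, 1/√n]`, so the hemisphere integral is at least `1/(2√n)`.
-/

open MeasureTheory Set Real Metric

lemma addHaar_setOf_norm_sq_le {E : Type*} [NormedAddCommGroup E] [NormedSpace ℝ E]
    [MeasurableSpace E] [BorelSpace E] [FiniteDimensional ℝ E] [Nontrivial E]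
    (μ : Measure E) [μ.IsAddHaarMeasure] (t : ℝ) :
    μ {y | ‖y‖ ^ 2 ≤ t} = ENNReal.ofReal (√t ^ Module.finrank ℝ E) * μ (closedBall 0 1) := by
  rcases lt_or_ge t 0 with ht | ht
  · have hempty : {y : E | ‖y‖ ^ 2 ≤ t} = ∅ :=
      eq_empty_of_forall_notMem fun y hy => (ht.trans_le (by positivity)).not_ge hy
    simp [hempty, sqrt_eq_zero'.2 ht.le, Module.finrank_pos.ne']
  · have hball : {y : E | ‖y‖ ^ 2 ≤ t} = closedBall 0 √t := by
      ext y
      simp [le_sqrt (norm_nonneg y) ht]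
    rw [hball, Measure.addHaar_closedBall' μ 0 (sqrt_nonneg t)]

lemma EuclideanSpace.measurePreserving_fst_tail (n : ℕ) :
    MeasurePreserving (fun x : EuclideanSpace ℝ (Fin (n + 1)) =>
      (x 0, WithLp.toLp 2 fun i => x (Fin.succAbove 0 i))) :=
  ((MeasurePreserving.id volume).prod (PiLp.volume_preserving_toLp (Fin n))).comp
    ((measurePreserving_piFinSuccAbove (fun _ => volume) 0).comp
      (PiLp.volume_preserving_ofLp (Fin (n + 1))))

lemma EuclideanSpace.norm_sq_eq_sq_add_norm_sq_tail {n : ℕ} (x : EuclideanSpace ℝ (Fin (n + 1))) :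
    ‖x‖ ^ 2 = x 0 ^ 2 + ‖WithLp.toLp 2 fun i => x (Fin.succAbove 0 i)‖ ^ 2 := by
  simp [EuclideanSpace.norm_sq_eq, Fin.sum_univ_succAbove _ 0]

lemma volume_unitBall_inter_fst_mem_eq_lintegral (n : ℕ) [NeZero n] {S : Set ℝ}
    (hS : MeasurableSet S) :
    volume {x : EuclideanSpace ℝ (Fin (n + 1)) | ‖x‖ ≤ 1 ∧ x 0 ∈ S} =
      volume (closedBall (0 : EuclideanSpace ℝ (Fin n)) 1) *
        ∫⁻ s in S, ENNReal.ofReal (√(1 - s ^ 2) ^ n) := by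
  set T : Set (ℝ × EuclideanSpace ℝ (Fin n)) := {p | p.1 ^ 2 + ‖p.2‖ ^ 2 ≤ 1} ∩ Prod.fst ⁻¹' S
  have hT : MeasurableSet T :=
    (measurableSet_le (by fun_prop) measurable_const).inter (measurable_fst hS)
  have hpre : {x : EuclideanSpace ℝ (Fin (n + 1)) | ‖x‖ ≤ 1 ∧ x 0 ∈ S} =
      (fun x : EuclideanSpace ℝ (Fin (n + 1)) =>
        (x 0, WithLp.toLp 2 fun i => x (Fin.succAbove 0 i))) ⁻¹' T := by
    ext x
    simp only [T, mem_inter_iff, mem_ofPred_eq, mem_preimage]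
    rw [← EuclideanSpace.norm_sq_eq_sq_add_norm_sq_tail, sq_le_one_iff₀ (norm_nonneg x)]
  have hslice : ∀ s, volume (Prod.mk s ⁻¹' T) =
      S.indicator (fun s => ENNReal.ofReal (√(1 - s ^ 2) ^ n) *
        volume (closedBall (0 : EuclideanSpace ℝ (Fin n)) 1)) s := by
    intro s
    by_cases hs : s ∈ S
    · have hslice_mem : Prod.mk s ⁻¹' T = {y | ‖y‖ ^ 2 ≤ 1 - s ^ 2} := by
        ext y
        simp [T, hs, le_sub_iff_add_le']
      rw [indicator_of_mem hs, hslice_mem, addHaar_setOf_norm_sq_le, finrank_euclideanSpace_fin]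
    · have hslice_notMem : Prod.mk s ⁻¹' T = ∅ := eq_empty_of_forall_notMem fun y hy => hs hy.2
      rw [indicator_of_notMem hs, hslice_notMem, measure_empty]
  rw [hpre, (EuclideanSpace.measurePreserving_fst_tail n).measure_preimage hT.nullMeasurableSet,
    Measure.volume_eq_prod, Measure.prod_apply hT]
  simp_rw [hslice]
  rw [lintegral_indicator hS, lintegral_mul_const _ (by fun_prop), mul_comm]

lemma integral_Ioi_mul_exp_neg_mul_sq {a : ℝ} (ha : 0 < a) (b : ℝ) :
    ∫ s in Ioi b, s * exp (-a * s ^ 2) = exp (-a * b ^ 2) / (2 * a) := by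
  have hderiv : ∀ s ∈ Ici b, HasDerivAt (fun s => -exp (-a * s ^ 2) / (2 * a))
      (s * exp (-a * s ^ 2)) s := by
    intro s _
    have h := (((hasDerivAt_pow 2 s).const_mul (-a)).exp.neg.div_const (2 * a))
    refine h.congr_deriv ?_
    field_simp
    ring
  have hlim : Filter.Tendsto (fun s => -exp (-a * s ^ 2) / (2 * a)) Filter.atTop (nhds 0) := by
    have := ((tendsto_exp_atBot.comp ((Filter.tendsto_pow_atTop two_ne_zero).const_mul_atTop_of_neg
      (neg_neg_of_pos ha)))).neg.div_const (2 * a)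
    simpa [Function.comp_def] using this
  rw [integral_Ioi_of_hasDerivAt_of_tendsto' hderiv
    (integrable_mul_exp_neg_mul_sq ha).integrableOn hlim]
  ring

lemma sqrt_one_sub_sq_pow_le_exp (s : ℝ) (n : ℕ) :
    √(1 - s ^ 2) ^ n ≤ exp (-(n / 2) * s ^ 2) := by
  have hbase : √(1 - s ^ 2) ≤ exp (-s ^ 2 / 2) := by
    refine sqrt_le_iff.2 ⟨(exp_pos _).le, ?_⟩
    calc 1 - s ^ 2 ≤ exp (-s ^ 2) := by linarith [add_one_le_exp (-s ^ 2)]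
      _ = exp (-s ^ 2 / 2) ^ 2 := by rw [← exp_nat_mul]; ring_nf
  calc √(1 - s ^ 2) ^ n ≤ exp (-s ^ 2 / 2) ^ n := pow_le_pow_left₀ (sqrt_nonneg _) hbase n
    _ = exp (-(n / 2) * s ^ 2) := by rw [← exp_nat_mul]; ring_nf

lemma lintegral_Ici_sqrt_one_sub_sq_pow_le {n : ℕ} (hn : n ≠ 0) {b : ℝ} (hb : 0 < b) :
    ∫⁻ s in Ici b, ENNReal.ofReal (√(1 - s ^ 2) ^ n) ≤
      ENNReal.ofReal (exp (-n * b ^ 2 / 2) / (n * b)) := by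
  have ha : (0 : ℝ) < n / 2 := by positivity
  have hle : ∀ s ∈ Ici b, √(1 - s ^ 2) ^ n ≤ b⁻¹ * (s * exp (-(n / 2) * s ^ 2)) := by
    intro s hs
    calc √(1 - s ^ 2) ^ n ≤ exp (-(n / 2) * s ^ 2) := sqrt_one_sub_sq_pow_le_exp s n
      _ ≤ (s / b) * exp (-(n / 2) * s ^ 2) :=
        le_mul_of_one_le_left (exp_pos _).le ((one_le_div hb).2 hs)
      _ = b⁻¹ * (s * exp (-(n / 2) * s ^ 2)) := by ring
  calc ∫⁻ s in Ici b, ENNReal.ofReal (√(1 - s ^ 2) ^ n)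
      ≤ ∫⁻ s in Ioi b, ENNReal.ofReal (b⁻¹ * (s * exp (-(n / 2) * s ^ 2))) := by
        rw [← restrict_Ioi_eq_restrict_Ici]
        exact setLIntegral_mono (by fun_prop) fun s hs =>
          ENNReal.ofReal_le_ofReal (hle s (mem_Ici_of_Ioi hs))
    _ = ENNReal.ofReal (∫ s in Ioi b, b⁻¹ * (s * exp (-(n / 2) * s ^ 2))) := by
        rw [ofReal_integral_eq_lintegral_ofReal]
        · exact ((integrable_mul_exp_neg_mul_sq ha).integrableOn).const_mul _
        · filter_upwards [ae_restrict_mem measurableSet_Ioi] with s hs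
          exact mul_nonneg (inv_nonneg.2 hb.le) (mul_nonneg (hb.trans hs).le (exp_pos _).le)
    _ = ENNReal.ofReal (exp (-n * b ^ 2 / 2) / (n * b)) := by
        rw [integral_const_mul, integral_Ioi_mul_exp_neg_mul_sq ha]
        congr 1
        field_simp

lemma half_le_sqrt_one_sub_sq_pow {n : ℕ} (hn : 2 ≤ n) {s : ℝ} (hs : n * s ^ 2 ≤ 1) :
    1 / 2 ≤ √(1 - s ^ 2) ^ n := by
  have hn' : (2 : ℝ) ≤ n := by exact_mod_cast hn
  have hs1 : s ^ 2 ≤ 1 := by nlinarith [sq_nonneg s]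
  have hbern := one_add_mul_self_le_rpow_one_add (s := -s ^ 2) (p := n / 2) (by linarith)
    (by linarith)
  rw [sqrt_eq_rpow, ← rpow_mul_natCast (by linarith)]
  calc (1 : ℝ) / 2 ≤ 1 + n / 2 * -s ^ 2 := by linarith
    _ ≤ (1 + -s ^ 2) ^ ((n : ℝ) / 2) := hbern
    _ = (1 - s ^ 2) ^ (1 / 2 * (n : ℝ)) := by ring_nf

lemma ofReal_inv_two_mul_sqrt_le_lintegral_Ici_zero {n : ℕ} (hn : 2 ≤ n) :
    ENNReal.ofReal (1 / (2 * √n)) ≤ ∫⁻ s in Ici 0, ENNReal.ofReal (√(1 - s ^ 2) ^ n) := by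
  have hn' : (0 : ℝ) < n := by positivity
  have hhalf : ∀ s ∈ Icc 0 (1 / √n), 1 / 2 ≤ √(1 - s ^ 2) ^ n := by
    intro s hs
    refine half_le_sqrt_one_sub_sq_pow hn ?_
    have := pow_le_pow_left₀ hs.1 hs.2 2
    rwa [div_pow, one_pow, sq_sqrt hn'.le, le_div_iff₀' hn'] at this
  calc ENNReal.ofReal (1 / (2 * √n))
      = ∫⁻ _ in Icc 0 (1 / √n), ENNReal.ofReal (1 / 2) := by
        rw [setLIntegral_const, Real.volume_Icc, ← ENNReal.ofReal_mul (by norm_num)]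
        congr 1
        field_simp
        ring
    _ ≤ ∫⁻ s in Icc 0 (1 / √n), ENNReal.ofReal (√(1 - s ^ 2) ^ n) :=
        setLIntegral_mono (by fun_prop) fun s hs => ENNReal.ofReal_le_ofReal (hhalf s hs)
    _ ≤ ∫⁻ s in Ici 0, ENNReal.ofReal (√(1 - s ^ 2) ^ n) :=
        lintegral_mono_set Icc_subset_Ici_self

/-- For `d ≥ 3` and `c ≥ 1`, the volume of the portion of the unit ball of `ℝ^d` above the
plane `x₁ = c/√(d−1)` is at most `(2/c) e^{−c²/2}` times the volume of the upper hemisphere. -/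
theorem volume_cap_le_hemisphere (d : ℕ) (hd : 3 ≤ d) (c : ℝ) (hc : 1 ≤ c) :
    volume {x : EuclideanSpace ℝ (Fin d) |
        ‖x‖ ≤ 1 ∧ c / Real.sqrt ((d : ℝ) - 1) ≤ x ⟨0, by omega⟩}
      ≤ ENNReal.ofReal ((2 / c) * Real.exp (-(c ^ 2) / 2)) *
          volume {x : EuclideanSpace ℝ (Fin d) | ‖x‖ ≤ 1 ∧ 0 ≤ x ⟨0, by omega⟩} := by
  obtain ⟨n, rfl⟩ : ∃ n, d = n + 1 := ⟨d - 1, by omega⟩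
  have : NeZero n := ⟨by omega⟩
  have hn : (0 : ℝ) < n := Nat.cast_pos.2 (by omega)
  have hc0 : 0 < c := by linarith
  have hb : 0 < c / √n := by positivity
  have hcap := volume_unitBall_inter_fst_mem_eq_lintegral n (measurableSet_Ici (a := c / √n))
  have hhemi := volume_unitBall_inter_fst_mem_eq_lintegral n (measurableSet_Ici (a := 0))
  simp only [mem_Ici] at hcap hhemi
  simp only [Fin.mk_zero, Nat.cast_add, Nat.cast_one, add_sub_cancel_right]
  rw [hcap, hhemi, mul_left_comm]
  gcongr
  have hcoeff : exp (-n * (c / √n) ^ 2 / 2) / (n * (c / √n)) =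
      2 / c * exp (-c ^ 2 / 2) * (1 / (2 * √n)) := by
    rw [div_pow, sq_sqrt hn.le]
    field_simp
    exact sq_sqrt hn.le
  calc ∫⁻ s in Ici (c / √n), ENNReal.ofReal (√(1 - s ^ 2) ^ n)
      ≤ ENNReal.ofReal (exp (-n * (c / √n) ^ 2 / 2) / (n * (c / √n))) :=
        lintegral_Ici_sqrt_one_sub_sq_pow_le (NeZero.ne n) hb
    _ = ENNReal.ofReal (2 / c * exp (-c ^ 2 / 2)) * ENNReal.ofReal (1 / (2 * √n)) := by
        rw [hcoeff, ENNReal.ofReal_mul (by positivity)]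
    _ ≤ _ := by gcongr; exact ofReal_inv_two_mul_sqrt_le_lintegral_Ici_zero (by omega)
end

section
/- (DDIM marginal consistency, one-dimensional case) Let 0 < α' < 1 and 0 < α < 1 be reals, let x₀ ∈ ℝ, and let σ ≥ 0 satisfy σ² ≤ 1 − α'. Suppose X is a random variable with Gaussian law of mean √α · x₀ and variance 1 − α, and Z is an independent standard Gaussian random variable. Define Y := √α' · x₀ + √(1 − α' − σ²) · (X − √α · x₀)/√(1 − α) + σ Z. Then the law of Y is the Gaussian measure with mean √α' · x₀ and variance 1 − α'. -/
/-!
With `c = √(1 − α' − σ²) / √(1 − α)`, the variable `Y` is the affine combination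
`c X + σ Z + (√α' x₀ − c √α x₀)` of the independent Gaussians `X` and `Z`, hence Gaussian with
mean `√α' x₀` and variance `c² (1 − α) + σ² = 1 − α'`.
-/

open MeasureTheory ProbabilityTheory
open scoped NNReal

namespace ProbabilityTheory

variable {Ω : Type*} {mΩ : MeasurableSpace Ω} {P : Measure Ω} {X Z : Ω → ℝ}
  {m₁ m₂ : ℝ} {v₁ v₂ : ℝ≥0}

lemma aemeasurable_of_map_eq_gaussianReal (hX : P.map X = gaussianReal m₁ v₁) :
    AEMeasurable X P :=
  AEMeasurable.of_map_ne_zero (by simp [hX, NeZero.ne])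

lemma map_const_mul_eq_gaussianReal (hX : P.map X = gaussianReal m₁ v₁) (a : ℝ) :
    P.map (fun ω ↦ a * X ω) = gaussianReal (a * m₁) (.mk (a ^ 2) (sq_nonneg a) * v₁) := by
  change P.map ((a * ·) ∘ X) = _
  rw [← AEMeasurable.map_map_of_aemeasurable (by fun_prop)
    (aemeasurable_of_map_eq_gaussianReal hX), hX, gaussianReal_map_const_mul]

lemma map_add_const_eq_gaussianReal (hX : P.map X = gaussianReal m₁ v₁) (b : ℝ) :
    P.map (fun ω ↦ X ω + b) = gaussianReal (m₁ + b) v₁ := by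
  change P.map ((· + b) ∘ X) = _
  rw [← AEMeasurable.map_map_of_aemeasurable (by fun_prop)
    (aemeasurable_of_map_eq_gaussianReal hX), hX, gaussianReal_map_add_const]

lemma IndepFun.map_mul_add_mul_add_const_eq_gaussianReal (hXZ : IndepFun X Z P)
    (hX : P.map X = gaussianReal m₁ v₁) (hZ : P.map Z = gaussianReal m₂ v₂) (a b d : ℝ) :
    P.map (fun ω ↦ a * X ω + b * Z ω + d)
      = gaussianReal (a * m₁ + b * m₂ + d)
          (.mk (a ^ 2) (sq_nonneg a) * v₁ + .mk (b ^ 2) (sq_nonneg b) * v₂) :=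
  map_add_const_eq_gaussianReal
    (gaussianReal_add_gaussianReal_of_indepFun
      (hXZ.comp (measurable_const_mul a) (measurable_const_mul b))
      (map_const_mul_eq_gaussianReal hX a) (map_const_mul_eq_gaussianReal hZ b)) d

end ProbabilityTheory

theorem ddim_marginal_consistency_general {Ω : Type*} [MeasureSpace Ω]
    (α α' : ℝ) (hα1 : α < 1)
    (x₀ : ℝ) (σ : ℝ) (hσ : σ ^ 2 ≤ 1 - α')
    (X Z : Ω → ℝ)
    (hXlaw : Measure.map X ℙ = gaussianReal (Real.sqrt α * x₀) (Real.toNNReal (1 - α)))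
    (hZlaw : Measure.map Z ℙ = gaussianReal 0 1)
    (hindep : IndepFun X Z ℙ) :
    Measure.map
        (fun ω => Real.sqrt α' * x₀
          + Real.sqrt (1 - α' - σ ^ 2) * (X ω - Real.sqrt α * x₀) / Real.sqrt (1 - α)
          + σ * Z ω) ℙ
      = gaussianReal (Real.sqrt α' * x₀) (Real.toNNReal (1 - α')) := by
  set c := Real.sqrt (1 - α' - σ ^ 2) / Real.sqrt (1 - α)
  have hc : c ^ 2 * (1 - α) = 1 - α' - σ ^ 2 := by
    rw [div_pow, Real.sq_sqrt (by linarith), Real.sq_sqrt (by linarith)]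
    field_simp [sub_ne_zero.mpr hα1.ne']
  have hY : (fun ω => Real.sqrt α' * x₀
        + Real.sqrt (1 - α' - σ ^ 2) * (X ω - Real.sqrt α * x₀) / Real.sqrt (1 - α) + σ * Z ω)
      = fun ω => c * X ω + σ * Z ω + (Real.sqrt α' * x₀ - c * (Real.sqrt α * x₀)) := by
    funext ω
    ring
  rw [hY, hindep.map_mul_add_mul_add_const_eq_gaussianReal hXlaw hZlaw]
  congr 1
  · ring
  · have h1α' : 0 ≤ 1 - α' := le_trans (sq_nonneg σ) hσ
    ext
    simp only [mul_one, NNReal.coe_add, NNReal.coe_mul, NNReal.coe_mk,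
      Real.coe_toNNReal _ (sub_nonneg.mpr hα1.le), Real.coe_toNNReal _ h1α']
    linarith

/-- (DDIM marginal consistency, one-dimensional case) If `X ∼ N(√α x₀, 1 − α)`, `Z` is an
independent standard Gaussian, `0 ≤ σ` with `σ² ≤ 1 − α'`, then
`Y = √α' x₀ + √(1 − α' − σ²) (X − √α x₀)/√(1 − α) + σZ` has law `N(√α' x₀, 1 − α')`. -/
theorem ddim_marginal_consistency {Ω : Type*} [MeasureSpace Ω]
    [IsProbabilityMeasure (ℙ : Measure Ω)]
    (α α' : ℝ) (hα : 0 < α) (hα1 : α < 1) (hα' : 0 < α') (hα'1 : α' < 1)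
    (x₀ : ℝ) (σ : ℝ) (hσ0 : 0 ≤ σ) (hσ : σ ^ 2 ≤ 1 - α')
    (X Z : Ω → ℝ) (hXmeas : Measurable X) (hZmeas : Measurable Z)
    (hXlaw : Measure.map X ℙ = gaussianReal (Real.sqrt α * x₀) (Real.toNNReal (1 - α)))
    (hZlaw : Measure.map Z ℙ = gaussianReal 0 1)
    (hindep : IndepFun X Z ℙ) :
    Measure.map
        (fun ω => Real.sqrt α' * x₀
          + Real.sqrt (1 - α' - σ ^ 2) * (X ω - Real.sqrt α * x₀) / Real.sqrt (1 - α)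
          + σ * Z ω) ℙ
      = gaussianReal (Real.sqrt α' * x₀) (Real.toNNReal (1 - α')) :=
  ddim_marginal_consistency_general α α' hα1 x₀ σ hσ X Z hXlaw hZlaw hindep
end
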